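/- For every finite H ⊆ [p]^m and every i ∈ [m], and every subset S of coordinates, the size of the restriction of the shifted class S_i(H) to S is at most the size of the restriction of H to S: |S_i(H)|_S| ≤ |H|_S|. -/

import Mathlib

/-!
Fibre the functions by their values off coordinate `i`. Shifting replaces each fibre of `H`
by the initial segment of the same fibre with as many elements, so `|Sᵢ(H)| ≤ |H|`.
If `i ∉ S`, every function of `Sᵢ(H)` agrees on `S` with a member of its (nonempty) fibre
in `H`, so `Sᵢ(H)|_S ⊆ H|_S`. If `i ∈ S`, restriction to `S` maps each fibre of `H`
injectively into a fibre of `H|_S`, whence `Sᵢ(H)|_S ⊆ Sᵢ(H|_S)`, and the first bound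
applied to `H|_S` concludes.
-/

/-- The shifting operator in direction `i`: a function `g` belongs to the shifted
class iff `g i` (0-indexed) is smaller than the size of the edge of `H` in
direction `i` determined by the values of `g` off coordinate `i`. -/
def shift {m p : ℕ} (i : Fin m) (H : Finset (Fin m → Fin p)) :
    Finset (Fin m → Fin p) :=
  Finset.univ.filter fun g =>
    (g i : ℕ) < (H.filter fun h => ∀ j, j ≠ i → h j = g j).card

open Finset

variable {ι : Type*} [DecidableEq ι] [Fintype ι] {p : ℕ}

def edge (i : ι) (H : Finset (ι → Fin p)) (g : ι → Fin p) : Finset (ι → Fin p) :=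
  H.filter fun h => ∀ j, j ≠ i → h j = g j

/-- `shift` over an arbitrary finite index type, so that it applies to restrictions to `S`. -/
def coordShift (i : ι) (H : Finset (ι → Fin p)) : Finset (ι → Fin p) :=
  univ.filter fun g => (g i : ℕ) < (edge i H g).card

theorem shift_eq_coordShift {m : ℕ} (i : Fin m) (H : Finset (Fin m → Fin p)) :
    shift i H = coordShift i H := by
  unfold shift coordShift edge
  congr!

section

variable {i : ι} {H : Finset (ι → Fin p)} {g h : ι → Fin p}

theorem mem_coordShift : g ∈ coordShift i H ↔ (g i : ℕ) < (edge i H g).card := by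
  simp [coordShift]

theorem edge_eq_filter_restrict :
    edge i H g = H.filter ((univ.erase i).restrict · = (univ.erase i).restrict g) := by
  ext h
  simp [edge, funext_iff]

theorem edge_nonempty_of_mem_coordShift (hg : g ∈ coordShift i H) : (edge i H g).Nonempty :=
  card_pos.mp (Nat.zero_lt_of_lt (mem_coordShift.mp hg))

theorem eq_of_restrict_erase_eq (hr : (univ.erase i).restrict g = (univ.erase i).restrict h)
    (hi : g i = h i) : g = h := by
  funext j
  by_cases hj : j = i
  · exact hj ▸ hi
  · simpa using congrFun hr ⟨j, mem_erase.mpr ⟨hj, mem_univ j⟩⟩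

end

theorem image_restrict_coordShift_subset_of_notMem {i : ι} {S : Finset ι} (hi : i ∉ S)
    (H : Finset (ι → Fin p)) :
    (coordShift i H).image S.restrict ⊆ H.image S.restrict := by
  intro f hf
  obtain ⟨g, hg, rfl⟩ := mem_image.mp hf
  obtain ⟨h, hh⟩ := edge_nonempty_of_mem_coordShift hg
  rw [edge, mem_filter] at hh
  exact mem_image.mpr ⟨h, hh.1, funext fun j => hh.2 j (ne_of_mem_of_not_mem j.2 hi)⟩

theorem card_coordShift_le (i : ι) (H : Finset (ι → Fin p)) :
    (coordShift i H).card ≤ H.card := by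
  set r := (univ.erase i).restrict (π := fun _ => Fin p)
  have fibre_le :
      ∀ w, ((coordShift i H).filter (r · = w)).card ≤ (H.filter (r · = w)).card := by
    intro w
    refine (card_le_card_of_injOn (fun g : ι → Fin p => (g i : ℕ)) (t := range _)
      (fun g hg => ?_) fun g hg g' hg' hgg' => ?_).trans_eq (card_range _)
    · rw [mem_coe, mem_filter] at hg
      rw [mem_coe, mem_range, ← hg.2, ← edge_eq_filter_restrict]
      exact mem_coordShift.mp hg.1
    · rw [mem_coe, mem_filter] at hg hg'
      exact eq_of_restrict_erase_eq (hg.2.trans hg'.2.symm) (Fin.ext hgg')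
  calc (coordShift i H).card
      = ∑ w ∈ (coordShift i H).image r, ((coordShift i H).filter (r · = w)).card :=
        card_eq_sum_card_image r _
    _ ≤ ∑ w ∈ (coordShift i H).image r, (H.filter (r · = w)).card :=
        sum_le_sum fun w _ => fibre_le w
    _ ≤ ∑ w ∈ H.image r, (H.filter (r · = w)).card :=
        sum_le_sum_of_subset
          (image_restrict_coordShift_subset_of_notMem (notMem_erase i univ) H)
    _ = H.card := (card_eq_sum_card_image r _).symm

theorem card_edge_le_card_edge_restrict {i : ι} {S : Finset ι} (hi : i ∈ S)
    (H : Finset (ι → Fin p)) (g : ι → Fin p) :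
    (edge i H g).card ≤ (edge ⟨i, hi⟩ (H.image S.restrict) (S.restrict g)).card := by
  refine card_le_card_of_injOn S.restrict (fun h hh => ?_) fun h hh h' hh' hhh' => ?_
  · rw [mem_coe, edge, mem_filter] at hh ⊢
    exact ⟨mem_image_of_mem _ hh.1, fun j hj => hh.2 j (fun h => hj (Subtype.ext h))⟩
  · rw [mem_coe, edge_eq_filter_restrict, mem_filter] at hh hh'
    exact eq_of_restrict_erase_eq (hh.2.trans hh'.2.symm) (congrFun hhh' ⟨i, hi⟩)

theorem image_restrict_coordShift_subset {i : ι} {S : Finset ι} (hi : i ∈ S)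
    (H : Finset (ι → Fin p)) :
    (coordShift i H).image S.restrict ⊆ coordShift ⟨i, hi⟩ (H.image S.restrict) := by
  intro f hf
  obtain ⟨g, hg, rfl⟩ := mem_image.mp hf
  exact mem_coordShift.mpr
    ((mem_coordShift.mp hg).trans_le (card_edge_le_card_edge_restrict hi H g))

/-- Shifting does not increase the size of restrictions: for every subset `S` of
coordinates, `|Sᵢ(H)|_S| ≤ |H|_S|`. -/
theorem stmt9 {m p : ℕ} (H : Finset (Fin m → Fin p)) (i : Fin m)
    (S : Finset (Fin m)) :
    ((shift i H).image fun h => fun j : {x // x ∈ S} => h j.1).card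
      ≤ (H.image fun h => fun j : {x // x ∈ S} => h j.1).card := by
  rw [shift_eq_coordShift]
  change ((coordShift i H).image S.restrict).card ≤ (H.image S.restrict).card
  by_cases hi : i ∈ S
  · calc ((coordShift i H).image S.restrict).card
        ≤ (coordShift ⟨i, hi⟩ (H.image S.restrict)).card :=
          card_le_card (image_restrict_coordShift_subset hi H)
      _ ≤ (H.image S.restrict).card := card_coordShift_le _ _
  · exact card_le_card (image_restrict_coordShift_subset_of_notMem hi H)
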